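/- With K(𝔤) as above, the λ-bracket satisfies the conformal Jacobi identity: [a_λ [b_μ c]] − [b_μ [a_λ c]] = [[a_λ b]_{λ+μ} c] for all a, b, c ∈ 𝔤. -/
import Mathlib


open TensorProduct

/-- The conformal Jacobi identity for the Kac--Moody conformal algebra
`K(𝔤)`: `[a_λ [b_μ c]] − [b_μ [a_λ c]] = [[a_λ b]_{λ+μ} c]`. -/
theorem kac_moody_conformal_jacobi
    (k : Type*) [Field k] [CharZero k]
    (𝔤 : Type*) [LieRing 𝔤] [LieAlgebra k 𝔤]
    (B : LinearMap.BilinForm k 𝔤)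
    (hsymm : ∀ a b : 𝔤, B a b = B b a)
    (hinv : ∀ a b c : 𝔤, B ⁅a, b⁆ c = B a ⁅b, c⁆)
    (ιm : 𝔤 → (Polynomial k ⊗[k] 𝔤) × k)
    (hι : ∀ g : 𝔤, ιm g = ((1 : Polynomial k) ⊗ₜ[k] g, 0))
    (e : (Polynomial k ⊗[k] 𝔤) × k) (he : e = (0, 1)) :
    ∀ (a b c : 𝔤) (lam mu : k),
      (ιm ⁅a, ⁅b, c⁆⁆ + lam • (B a ⁅b, c⁆ • e))
        - (ιm ⁅b, ⁅a, c⁆⁆ + mu • (B b ⁅a, c⁆ • e)) =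
      ιm ⁅⁅a, b⁆, c⁆ + (lam + mu) • (B ⁅a, b⁆ c • e) := by
  intro a b c lam mu
  have hB : B b ⁅a, c⁆ = - B ⁅a, b⁆ c := by
    rw [← hinv b a c, ← lie_skew a b, map_neg, LinearMap.neg_apply, neg_neg]
  have hB2 : B a ⁅b, c⁆ = B ⁅a, b⁆ c := (hinv a b c).symm
  have hlie : ⁅a, ⁅b, c⁆⁆ - ⁅b, ⁅a, c⁆⁆ = ⁅⁅a, b⁆, c⁆ := (lie_lie a b c).symm
  simp only [hι, he, hB, hB2, Prod.ext_iff, Prod.fst_add, Prod.snd_add,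
    Prod.fst_sub, Prod.snd_sub, Prod.smul_fst, Prod.smul_snd, smul_zero,
    smul_eq_mul, mul_zero, mul_one, add_zero, zero_add, mul_neg]
  constructor
  · rw [← hlie, tmul_sub]
  · ring
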